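/- Let a, b : ℝ → (Fin n → ℂ) satisfy a' = (j/(2k₀))[W⁻¹PV (a − b) + V⁻¹QW (a + b)] and the analogous equation for b (with the sign of the W⁻¹PV term flipped for b). If P and Q are constant with P = P_r, Q = Q_r, W⁻¹P_rV = Λ and V⁻¹Q_rW = Λ, then a(z) = exp((j/k₀)Λ(z − z_L)) a(z_L), i.e., the forward wave only accumulates phase. -/

import Mathlib

open NormedSpace

attribute [local instance] Matrix.linftyOpNormedAddCommGroup Matrix.linftyOpNormedRing
  Matrix.linftyOpNormedAlgebra Matrix.linftyOpNormedSpace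

theorem constant_section_forward_wave_phase_only
    (n : ℕ) (k₀ : ℝ) (hk₀ : k₀ ≠ 0)
    (Λ W V Pr Qr : Matrix (Fin n) (Fin n) ℂ)
    (hPV : W⁻¹ * Pr * V = Λ) (hQW : V⁻¹ * Qr * W = Λ)
    (a b : ℝ → Fin n → ℂ)
    (ha : ∀ z : ℝ, HasDerivAt a
      ((Complex.I / (2 * k₀)) • ((W⁻¹ * Pr * V).mulVec (a z - b z)
        + (V⁻¹ * Qr * W).mulVec (a z + b z))) z)
    (hb : ∀ z : ℝ, HasDerivAt b
      ((Complex.I / (2 * k₀)) • (-(W⁻¹ * Pr * V).mulVec (a z - b z)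
        + (V⁻¹ * Qr * W).mulVec (a z + b z))) z)
    (zL : ℝ) :
    ∀ z : ℝ, a z = (exp (((Complex.I / k₀) * ((z : ℂ) - zL)) • Λ)).mulVec (a zL) := by
  have hk₀' : (k₀ : ℂ) ≠ 0 := Complex.ofReal_ne_zero.mpr hk₀
  -- `a` solves the linear ODE a' = (I/k₀) • Λ.mulVec a
  have hA : ∀ z : ℝ, HasDerivAt a ((Complex.I / k₀) • Λ.mulVec (a z)) z := by
    intro z
    have h := ha z
    rw [hPV, hQW] at h
    have hsum : (a z - b z) + (a z + b z) = (2 : ℂ) • a z := by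
      ext i; simp [two_smul]; ring
    have : (Complex.I / (2 * k₀)) • (Λ.mulVec (a z - b z) + Λ.mulVec (a z + b z))
        = (Complex.I / k₀) • Λ.mulVec (a z) := by
      rw [← Matrix.mulVec_add, hsum, Matrix.mulVec_smul, smul_smul]
      congr 1
      field_simp
    rwa [this] at h
  -- the candidate solution
  set g : ℝ → Fin n → ℂ :=
    fun z => (exp (((Complex.I / k₀) * ((z : ℂ) - zL)) • Λ)).mulVec (a zL) with hg
  -- the linear map "apply to a zL" as a continuous linear map
  let L : Matrix (Fin n) (Fin n) ℂ →ₗ[ℂ] (Fin n → ℂ) :=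
    { toFun := fun M => M.mulVec (a zL)
      map_add' := fun M N => Matrix.add_mulVec M N (a zL)
      map_smul' := fun c M => (Matrix.smul_mulVec c M (a zL)) }
  have hG : ∀ z : ℝ, HasDerivAt g ((Complex.I / k₀) • Λ.mulVec (g z)) z := by
    intro z
    have hc : HasDerivAt (fun z : ℝ => (Complex.I / k₀) * ((z : ℂ) - zL))
        (Complex.I / k₀) z := by
      simpa using (((Complex.ofRealCLM.hasDerivAt (x := z)).sub_const
        (zL : ℂ)).const_mul (Complex.I / k₀))
    have hexp : HasDerivAt (fun t : ℂ => exp (t • Λ))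
        (Λ * exp (((Complex.I / k₀) * ((z : ℂ) - zL)) • Λ))
        ((Complex.I / k₀) * ((z : ℂ) - zL)) := hasDerivAt_exp_smul_const' Λ _
    have hE : HasDerivAt (fun z : ℝ => exp (((Complex.I / k₀) * ((z : ℂ) - zL)) • Λ))
        ((Complex.I / k₀) • (Λ * exp (((Complex.I / k₀) * ((z : ℂ) - zL)) • Λ))) z :=
      by have h := hexp.scomp z hc; exact h
    have := ((L.toContinuousLinearMap.restrictScalars ℝ).hasFDerivAt.comp_hasDerivAt z hE)
    have heq : L.toContinuousLinearMap
        ((Complex.I / k₀) • (Λ * exp (((Complex.I / k₀) * ((z : ℂ) - zL)) • Λ)))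
        = (Complex.I / k₀) • Λ.mulVec (g z) := by
      simp only [ContinuousLinearMap.coe_restrictScalars', LinearMap.coe_toContinuousLinearMap', L, LinearMap.coe_mk, AddHom.coe_mk]
      rw [Matrix.smul_mulVec, ← Matrix.mulVec_mulVec]
    rw [ContinuousLinearMap.coe_restrictScalars'] at this
    exact this.congr_deriv heq
  -- uniqueness of ODE solutions
  intro z
  let T : (Fin n → ℂ) →L[ℂ] (Fin n → ℂ) :=
    LinearMap.toContinuousLinearMap (Matrix.mulVecLin ((Complex.I / k₀) • Λ))
  have hv : ∀ t : ℝ, LipschitzOnWith ‖T‖₊ (fun x : Fin n → ℂ => (Complex.I / k₀) • Λ.mulVec x)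
      (Set.univ) := by
    intro t
    have : (fun x : Fin n → ℂ => (Complex.I / k₀) • Λ.mulVec x) = fun x => T x := by
      funext x
      simp [T, Matrix.smul_mulVec]
    rw [this]
    exact T.lipschitz.lipschitzOnWith
  have hmem : zL ∈ Set.Ioo (min z zL - 1) (max z zL + 1) := by
    constructor
    · have := min_le_right z zL; linarith
    · have := le_max_right z zL; linarith
  have key := ODE_solution_unique_of_mem_Ioo (s := fun _ => Set.univ) (fun t _ => hv t) hmem
    (f := a) (g := g)
    (fun t _ => ⟨hA t, Set.mem_univ _⟩)
    (fun t _ => ⟨hG t, Set.mem_univ _⟩)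
    (by simp [g])
  have hz : z ∈ Set.Ioo (min z zL - 1) (max z zL + 1) := by
    constructor
    · have := min_le_left z zL; linarith
    · have := le_max_left z zL; linarith
  exact key hz
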